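/- If ρ₁₂ is a separable density matrix on ℂ^{d₁}⊗ℂ^{d₂} obtained as a reduced state, and W₁ ⪰ W̃₁ ⪰ 0, W₂ ⪰ W̃₂ ⪰ 0, then Tr(ρ₁₂(W₁⊗W₂)) ≥ Tr(ρ₁₂(W̃₁⊗W̃₂)). Consequently, if for a tripartite state ρ every pair (k,k') of subsystems has a witness 𝒲^{(k,k')} = (W_k⊗W_{k'} − W̃_k⊗W̃_{k'})⊗I with Tr(𝒲^{(k,k')}ρ) < 0, then ρ is genuinely multipartite entangled (not biseparable across any bipartition). -/

import Mathlib

open ComplexOrder Matrix Kronecker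

section

variable {d₁ d₂ d₃ : ℕ}

/-- A bipartite density matrix is separable if it is a finite convex combination of
product density matrices. -/
def SepState {e₁ e₂ : ℕ} (σ : Matrix (Fin e₁ × Fin e₂) (Fin e₁ × Fin e₂) ℂ) : Prop :=
  ∃ (m : ℕ) (lam : Fin m → ℝ) (σ₁ : Fin m → Matrix (Fin e₁) (Fin e₁) ℂ)
    (σ₂ : Fin m → Matrix (Fin e₂) (Fin e₂) ℂ),
    (∀ q, 0 ≤ lam q) ∧ (∑ q, lam q = 1) ∧
    (∀ q, (σ₁ q).PosSemidef ∧ (σ₁ q).trace = 1) ∧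
    (∀ q, (σ₂ q).PosSemidef ∧ (σ₂ q).trace = 1) ∧
    σ = ∑ q, (lam q : ℂ) • (σ₁ q ⊗ₖ σ₂ q)

/-- Embed `A ⊗ B` for the bipartition `1|23` into the tripartite space. -/
def split1 (A : Matrix (Fin d₁) (Fin d₁) ℂ)
    (B : Matrix (Fin d₂ × Fin d₃) (Fin d₂ × Fin d₃) ℂ) :
    Matrix (Fin d₁ × Fin d₂ × Fin d₃) (Fin d₁ × Fin d₂ × Fin d₃) ℂ :=
  Matrix.of fun x y => A x.1 y.1 * B x.2 y.2

/-- Embed `A ⊗ B` for the bipartition `2|13` into the tripartite space. -/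
def split2 (A : Matrix (Fin d₂) (Fin d₂) ℂ)
    (B : Matrix (Fin d₁ × Fin d₃) (Fin d₁ × Fin d₃) ℂ) :
    Matrix (Fin d₁ × Fin d₂ × Fin d₃) (Fin d₁ × Fin d₂ × Fin d₃) ℂ :=
  Matrix.of fun x y => A x.2.1 y.2.1 * B (x.1, x.2.2) (y.1, y.2.2)

/-- Embed `A ⊗ B` for the bipartition `3|12` into the tripartite space. -/
def split3 (A : Matrix (Fin d₃) (Fin d₃) ℂ)
    (B : Matrix (Fin d₁ × Fin d₂) (Fin d₁ × Fin d₂) ℂ) :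
    Matrix (Fin d₁ × Fin d₂ × Fin d₃) (Fin d₁ × Fin d₂ × Fin d₃) ℂ :=
  Matrix.of fun x y => A x.2.2 y.2.2 * B (x.1, x.2.1) (y.1, y.2.1)

/-- `ρ` is biseparable across the bipartition `1|23`. -/
def Bisep1 (ρ : Matrix (Fin d₁ × Fin d₂ × Fin d₃) (Fin d₁ × Fin d₂ × Fin d₃) ℂ) : Prop :=
  ∃ (m : ℕ) (lam : Fin m → ℝ) (ρA : Fin m → Matrix (Fin d₁) (Fin d₁) ℂ)
    (ρB : Fin m → Matrix (Fin d₂ × Fin d₃) (Fin d₂ × Fin d₃) ℂ),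
    (∀ q, 0 ≤ lam q) ∧ (∑ q, lam q = 1) ∧
    (∀ q, (ρA q).PosSemidef ∧ (ρA q).trace = 1) ∧
    (∀ q, (ρB q).PosSemidef ∧ (ρB q).trace = 1) ∧
    ρ = ∑ q, (lam q : ℂ) • split1 (ρA q) (ρB q)

/-- `ρ` is biseparable across the bipartition `2|13`. -/
def Bisep2 (ρ : Matrix (Fin d₁ × Fin d₂ × Fin d₃) (Fin d₁ × Fin d₂ × Fin d₃) ℂ) : Prop :=
  ∃ (m : ℕ) (lam : Fin m → ℝ) (ρA : Fin m → Matrix (Fin d₂) (Fin d₂) ℂ)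
    (ρB : Fin m → Matrix (Fin d₁ × Fin d₃) (Fin d₁ × Fin d₃) ℂ),
    (∀ q, 0 ≤ lam q) ∧ (∑ q, lam q = 1) ∧
    (∀ q, (ρA q).PosSemidef ∧ (ρA q).trace = 1) ∧
    (∀ q, (ρB q).PosSemidef ∧ (ρB q).trace = 1) ∧
    ρ = ∑ q, (lam q : ℂ) • split2 (ρA q) (ρB q)

/-- `ρ` is biseparable across the bipartition `3|12`. -/
def Bisep3 (ρ : Matrix (Fin d₁ × Fin d₂ × Fin d₃) (Fin d₁ × Fin d₂ × Fin d₃) ℂ) : Prop :=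
  ∃ (m : ℕ) (lam : Fin m → ℝ) (ρA : Fin m → Matrix (Fin d₃) (Fin d₃) ℂ)
    (ρB : Fin m → Matrix (Fin d₁ × Fin d₂) (Fin d₁ × Fin d₂) ℂ),
    (∀ q, 0 ≤ lam q) ∧ (∑ q, lam q = 1) ∧
    (∀ q, (ρA q).PosSemidef ∧ (ρA q).trace = 1) ∧
    (∀ q, (ρB q).PosSemidef ∧ (ρB q).trace = 1) ∧
    ρ = ∑ q, (lam q : ℂ) • split3 (ρA q) (ρB q)

/-- The operator `X` on subsystems `(1,2)` tensored with the identity on subsystem `3`. -/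
def pad12 (X : Matrix (Fin d₁ × Fin d₂) (Fin d₁ × Fin d₂) ℂ) :
    Matrix (Fin d₁ × Fin d₂ × Fin d₃) (Fin d₁ × Fin d₂ × Fin d₃) ℂ :=
  Matrix.of fun x y => X (x.1, x.2.1) (y.1, y.2.1) * (if x.2.2 = y.2.2 then 1 else 0)

/-- The operator `X` on subsystems `(1,3)` tensored with the identity on subsystem `2`. -/
def pad13 (X : Matrix (Fin d₁ × Fin d₃) (Fin d₁ × Fin d₃) ℂ) :
    Matrix (Fin d₁ × Fin d₂ × Fin d₃) (Fin d₁ × Fin d₂ × Fin d₃) ℂ :=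
  Matrix.of fun x y => X (x.1, x.2.2) (y.1, y.2.2) * (if x.2.1 = y.2.1 then 1 else 0)

/-- The operator `X` on subsystems `(2,3)` tensored with the identity on subsystem `1`. -/
def pad23 (X : Matrix (Fin d₂ × Fin d₃) (Fin d₂ × Fin d₃) ℂ) :
    Matrix (Fin d₁ × Fin d₂ × Fin d₃) (Fin d₁ × Fin d₂ × Fin d₃) ℂ :=
  Matrix.of fun x y => X x.2 y.2 * (if x.1 = y.1 then 1 else 0)

/-! For positive semidefinite `σ` and `W`, `Tr(σW) ≥ 0`; hence on a product state
`Tr((σ₁ ⊗ σ₂)(W₁ ⊗ W₂)) = Tr(σ₁W₁)·Tr(σ₂W₂)` is a product of nonnegative factors, each monotone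
in `W`, and the inequality passes to convex combinations. A state biseparable across `A|Ā` has a
separable reduced state on any pair `k ∈ A`, `k' ∈ Ā`, since the partial trace of each product
term is again a product state; as `Tr((X ⊗ I)ρ) = Tr(X ρ_{kk'})`, the witness for that pair has
nonnegative expectation in `ρ`. -/

namespace Matrix

variable {𝕜 : Type*} [RCLike 𝕜] {n m α β : Type*} [Fintype n] [Fintype m] [Fintype β]

lemma PosSemidef.trace_mul_nonneg {A B : Matrix n n 𝕜} (hA : A.PosSemidef) (hB : B.PosSemidef) :
    0 ≤ (A * B).trace := by
  classical
  open MatrixOrder in obtain ⟨C, rfl⟩ := CStarAlgebra.nonneg_iff_eq_star_mul_self.mp hA.nonneg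
  rw [Matrix.mul_assoc, trace_mul_comm]
  exact (hB.mul_mul_conjTranspose_same C).trace_nonneg

lemma PosSemidef.trace_mul_mono {σ W Wt : Matrix n n 𝕜} (hσ : σ.PosSemidef)
    (hW : (W - Wt).PosSemidef) : (σ * Wt).trace ≤ (σ * W).trace := by
  simpa only [Matrix.mul_sub, trace_sub, sub_nonneg] using hσ.trace_mul_nonneg hW

lemma PosSemidef.trace_kronecker_mul_mono {σ₁ W₁ Wt₁ : Matrix n n 𝕜} {σ₂ W₂ Wt₂ : Matrix m m 𝕜}
    (hσ₁ : σ₁.PosSemidef) (hσ₂ : σ₂.PosSemidef) (h₁ : (W₁ - Wt₁).PosSemidef)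
    (ht₁ : Wt₁.PosSemidef) (h₂ : (W₂ - Wt₂).PosSemidef) (ht₂ : Wt₂.PosSemidef) :
    ((σ₁ ⊗ₖ σ₂) * (Wt₁ ⊗ₖ Wt₂)).trace ≤ ((σ₁ ⊗ₖ σ₂) * (W₁ ⊗ₖ W₂)).trace := by
  simp only [← mul_kronecker_mul, trace_kronecker]
  exact mul_le_mul (hσ₁.trace_mul_mono h₁) (hσ₂.trace_mul_mono h₂) (hσ₂.trace_mul_nonneg ht₂)
    ((hσ₁.trace_mul_nonneg ht₁).trans (hσ₁.trace_mul_mono h₁))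

def traceRight (B : Matrix (α × β) (α × β) 𝕜) : Matrix α α 𝕜 :=
  ∑ k, B.submatrix (·, k) (·, k)

lemma PosSemidef.traceRight {B : Matrix (α × β) (α × β) 𝕜} (hB : B.PosSemidef) :
    (traceRight B).PosSemidef :=
  posSemidef_sum _ fun _ _ => hB.submatrix _

lemma trace_traceRight [Fintype α] (B : Matrix (α × β) (α × β) 𝕜) :
    (traceRight B).trace = B.trace := by
  rw [traceRight, trace_sum, trace, Fintype.sum_prod_type, Finset.sum_comm]
  rfl

end Matrix

open Matrix

lemma SepState.trace_mul_le {e₁ e₂ : ℕ}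
    {ρ₁₂ : Matrix (Fin e₁ × Fin e₂) (Fin e₁ × Fin e₂) ℂ} (hρ : SepState ρ₁₂)
    {W₁ Wt₁ : Matrix (Fin e₁) (Fin e₁) ℂ} {W₂ Wt₂ : Matrix (Fin e₂) (Fin e₂) ℂ}
    (h₁ : (W₁ - Wt₁).PosSemidef) (ht₁ : Wt₁.PosSemidef)
    (h₂ : (W₂ - Wt₂).PosSemidef) (ht₂ : Wt₂.PosSemidef) :
    (ρ₁₂ * (Wt₁ ⊗ₖ Wt₂)).trace ≤ (ρ₁₂ * (W₁ ⊗ₖ W₂)).trace := by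
  obtain ⟨m, lam, σ₁, σ₂, hlam, -, hσ₁, hσ₂, rfl⟩ := hρ
  simp only [Matrix.sum_mul, trace_sum, smul_mul_assoc, trace_smul]
  gcongr with q
  · exact_mod_cast hlam q
  · exact (hσ₁ q).1.trace_kronecker_mul_mono (hσ₂ q).1 h₁ ht₁ h₂ ht₂

lemma SepState.trace_witness_nonneg {e₁ e₂ : ℕ}
    {σ : Matrix (Fin e₁ × Fin e₂) (Fin e₁ × Fin e₂) ℂ} (hσ : SepState σ)
    {W₁ Wt₁ : Matrix (Fin e₁) (Fin e₁) ℂ} {W₂ Wt₂ : Matrix (Fin e₂) (Fin e₂) ℂ}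
    (h₁ : (W₁ - Wt₁).PosSemidef) (ht₁ : Wt₁.PosSemidef)
    (h₂ : (W₂ - Wt₂).PosSemidef) (ht₂ : Wt₂.PosSemidef) :
    0 ≤ ((W₁ ⊗ₖ W₂ - Wt₁ ⊗ₖ Wt₂) * σ).trace := by
  rw [trace_mul_comm, Matrix.mul_sub, trace_sub, sub_nonneg]
  exact hσ.trace_mul_le h₁ ht₁ h₂ ht₂

def reduced12 (ρ : Matrix (Fin d₁ × Fin d₂ × Fin d₃) (Fin d₁ × Fin d₂ × Fin d₃) ℂ) :
    Matrix (Fin d₁ × Fin d₂) (Fin d₁ × Fin d₂) ℂ :=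
  ∑ k, ρ.submatrix (fun x => (x.1, x.2, k)) (fun x => (x.1, x.2, k))

def reduced13 (ρ : Matrix (Fin d₁ × Fin d₂ × Fin d₃) (Fin d₁ × Fin d₂ × Fin d₃) ℂ) :
    Matrix (Fin d₁ × Fin d₃) (Fin d₁ × Fin d₃) ℂ :=
  ∑ j, ρ.submatrix (fun x => (x.1, j, x.2)) (fun x => (x.1, j, x.2))

lemma trace_pad12_mul (X : Matrix (Fin d₁ × Fin d₂) (Fin d₁ × Fin d₂) ℂ)
    (ρ : Matrix (Fin d₁ × Fin d₂ × Fin d₃) (Fin d₁ × Fin d₂ × Fin d₃) ℂ) :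
    (pad12 X * ρ).trace = (X * reduced12 ρ).trace := by
  simp only [trace, diag, mul_apply, pad12, reduced12, Matrix.sum_apply, submatrix_apply, of_apply,
    Fintype.sum_prod_type, mul_ite, mul_one, mul_zero, ite_mul, zero_mul, Finset.sum_ite_eq,
    Finset.mem_univ, if_true, Finset.mul_sum]
  exact Finset.sum_congr rfl fun _ _ => Finset.sum_congr rfl fun _ _ =>
    Finset.sum_comm.trans (Finset.sum_congr rfl fun _ _ => Finset.sum_comm)

lemma trace_pad13_mul (X : Matrix (Fin d₁ × Fin d₃) (Fin d₁ × Fin d₃) ℂ)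
    (ρ : Matrix (Fin d₁ × Fin d₂ × Fin d₃) (Fin d₁ × Fin d₂ × Fin d₃) ℂ) :
    (pad13 X * ρ).trace = (X * reduced13 ρ).trace := by
  simp only [trace, diag, mul_apply, pad13, reduced13, Matrix.sum_apply, submatrix_apply, of_apply,
    Fintype.sum_prod_type, mul_ite, mul_one, mul_zero, ite_mul, zero_mul, Finset.sum_ite_irrel,
    Finset.sum_const_zero, Finset.sum_ite_eq, Finset.mem_univ, if_true, Finset.mul_sum]
  exact Finset.sum_congr rfl fun _ _ => Finset.sum_comm.trans <| Finset.sum_congr rfl fun _ _ =>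
    Finset.sum_comm.trans <| Finset.sum_congr rfl fun _ _ => Finset.sum_comm

lemma reduced12_sum_smul {ι : Type*} [Fintype ι] (c : ι → ℂ)
    (ρ : ι → Matrix (Fin d₁ × Fin d₂ × Fin d₃) (Fin d₁ × Fin d₂ × Fin d₃) ℂ) :
    reduced12 (∑ q, c q • ρ q) = ∑ q, c q • reduced12 (ρ q) := by
  ext x y
  simp only [reduced12, Matrix.sum_apply, submatrix_apply, Matrix.smul_apply, smul_eq_mul,
    Finset.mul_sum]
  exact Finset.sum_comm

lemma reduced13_sum_smul {ι : Type*} [Fintype ι] (c : ι → ℂ)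
    (ρ : ι → Matrix (Fin d₁ × Fin d₂ × Fin d₃) (Fin d₁ × Fin d₂ × Fin d₃) ℂ) :
    reduced13 (∑ q, c q • ρ q) = ∑ q, c q • reduced13 (ρ q) := by
  ext x y
  simp only [reduced13, Matrix.sum_apply, submatrix_apply, Matrix.smul_apply, smul_eq_mul,
    Finset.mul_sum]
  exact Finset.sum_comm

lemma reduced12_split1 (A : Matrix (Fin d₁) (Fin d₁) ℂ)
    (B : Matrix (Fin d₂ × Fin d₃) (Fin d₂ × Fin d₃) ℂ) :
    reduced12 (split1 A B) = A ⊗ₖ traceRight B := by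
  ext x y
  simp [reduced12, split1, traceRight, Matrix.sum_apply, Finset.mul_sum]

lemma reduced12_split2 (A : Matrix (Fin d₂) (Fin d₂) ℂ)
    (B : Matrix (Fin d₁ × Fin d₃) (Fin d₁ × Fin d₃) ℂ) :
    reduced12 (split2 A B) = traceRight B ⊗ₖ A := by
  ext x y
  simp [reduced12, split2, traceRight, Matrix.sum_apply, Finset.mul_sum, mul_comm]

lemma reduced13_split3 (A : Matrix (Fin d₃) (Fin d₃) ℂ)
    (B : Matrix (Fin d₁ × Fin d₂) (Fin d₁ × Fin d₂) ℂ) :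
    reduced13 (split3 A B) = traceRight B ⊗ₖ A := by
  ext x y
  simp [reduced13, split3, traceRight, Matrix.sum_apply, Finset.mul_sum, mul_comm]

lemma Bisep1.sepState_reduced12
    {ρ : Matrix (Fin d₁ × Fin d₂ × Fin d₃) (Fin d₁ × Fin d₂ × Fin d₃) ℂ}
    (h : Bisep1 ρ) : SepState (reduced12 ρ) := by
  obtain ⟨m, lam, ρA, ρB, hlam, hsum, hA, hB, rfl⟩ := h
  refine ⟨m, lam, ρA, fun q => traceRight (ρB q), hlam, hsum, hA,
    fun q => ⟨(hB q).1.traceRight, (trace_traceRight _).trans (hB q).2⟩, ?_⟩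
  simp only [reduced12_sum_smul, reduced12_split1]

lemma Bisep2.sepState_reduced12
    {ρ : Matrix (Fin d₁ × Fin d₂ × Fin d₃) (Fin d₁ × Fin d₂ × Fin d₃) ℂ}
    (h : Bisep2 ρ) : SepState (reduced12 ρ) := by
  obtain ⟨m, lam, ρA, ρB, hlam, hsum, hA, hB, rfl⟩ := h
  refine ⟨m, lam, fun q => traceRight (ρB q), ρA, hlam, hsum,
    fun q => ⟨(hB q).1.traceRight, (trace_traceRight _).trans (hB q).2⟩, hA, ?_⟩
  simp only [reduced12_sum_smul, reduced12_split2]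

lemma Bisep3.sepState_reduced13
    {ρ : Matrix (Fin d₁ × Fin d₂ × Fin d₃) (Fin d₁ × Fin d₂ × Fin d₃) ℂ}
    (h : Bisep3 ρ) : SepState (reduced13 ρ) := by
  obtain ⟨m, lam, ρA, ρB, hlam, hsum, hA, hB, rfl⟩ := h
  refine ⟨m, lam, fun q => traceRight (ρB q), ρA, hlam, hsum,
    fun q => ⟨(hB q).1.traceRight, (trace_traceRight _).trans (hB q).2⟩, hA, ?_⟩
  simp only [reduced13_sum_smul, reduced13_split3]

/-- (a) Separable bipartite states respect the local partial ordering: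
`Tr(ρ₁₂(W₁⊗W₂)) ≥ Tr(ρ₁₂(W̃₁⊗W̃₂))`; and (b) if a tripartite state is detected by a
witness `𝒲^{(k,k')}` for every pair `(k,k')`, it is not biseparable across any
bipartition, i.e. it is genuinely multipartite entangled. -/
theorem stmt_16 :
    (∀ {e₁ e₂ : ℕ} (ρ₁₂ : Matrix (Fin e₁ × Fin e₂) (Fin e₁ × Fin e₂) ℂ),
      SepState ρ₁₂ →
      ∀ (W₁ Wt₁ : Matrix (Fin e₁) (Fin e₁) ℂ) (W₂ Wt₂ : Matrix (Fin e₂) (Fin e₂) ℂ),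
        (W₁ - Wt₁).PosSemidef → Wt₁.PosSemidef →
        (W₂ - Wt₂).PosSemidef → Wt₂.PosSemidef →
        (ρ₁₂ * (Wt₁ ⊗ₖ Wt₂)).trace ≤ (ρ₁₂ * (W₁ ⊗ₖ W₂)).trace) ∧
    (∀ (ρ : Matrix (Fin d₁ × Fin d₂ × Fin d₃) (Fin d₁ × Fin d₂ × Fin d₃) ℂ),
      ρ.PosSemidef → ρ.trace = 1 →
      (∃ (W₁ Wt₁ : Matrix (Fin d₁) (Fin d₁) ℂ) (W₂ Wt₂ : Matrix (Fin d₂) (Fin d₂) ℂ),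
        (W₁ - Wt₁).PosSemidef ∧ Wt₁.PosSemidef ∧ (W₂ - Wt₂).PosSemidef ∧ Wt₂.PosSemidef ∧
        (pad12 (d₃ := d₃) (W₁ ⊗ₖ W₂ - Wt₁ ⊗ₖ Wt₂) * ρ).trace < 0) →
      (∃ (W₁ Wt₁ : Matrix (Fin d₁) (Fin d₁) ℂ) (W₃ Wt₃ : Matrix (Fin d₃) (Fin d₃) ℂ),
        (W₁ - Wt₁).PosSemidef ∧ Wt₁.PosSemidef ∧ (W₃ - Wt₃).PosSemidef ∧ Wt₃.PosSemidef ∧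
        (pad13 (d₂ := d₂) (W₁ ⊗ₖ W₃ - Wt₁ ⊗ₖ Wt₃) * ρ).trace < 0) →
      (∃ (W₂ Wt₂ : Matrix (Fin d₂) (Fin d₂) ℂ) (W₃ Wt₃ : Matrix (Fin d₃) (Fin d₃) ℂ),
        (W₂ - Wt₂).PosSemidef ∧ Wt₂.PosSemidef ∧ (W₃ - Wt₃).PosSemidef ∧ Wt₃.PosSemidef ∧
        (pad23 (d₁ := d₁) (W₂ ⊗ₖ W₃ - Wt₂ ⊗ₖ Wt₃) * ρ).trace < 0) →
      ¬ (Bisep1 ρ ∨ Bisep2 ρ ∨ Bisep3 ρ)) := by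
  refine ⟨fun _ hρ₁₂ _ _ _ _ => hρ₁₂.trace_mul_le, ?_⟩
  rintro ρ - - ⟨W₁, Wt₁, W₂, Wt₂, h₁, ht₁, h₂, ht₂, hw₁₂⟩
    ⟨W₁', Wt₁', W₃, Wt₃, h₁', ht₁', h₃, ht₃, hw₁₃⟩ - hbisep
  have h₁₂ : ¬ SepState (reduced12 ρ) := fun hsep => hw₁₂.not_ge <| by
    rw [trace_pad12_mul]
    exact hsep.trace_witness_nonneg h₁ ht₁ h₂ ht₂
  have h₁₃ : ¬ SepState (reduced13 ρ) := fun hsep => hw₁₃.not_ge <| by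
    rw [trace_pad13_mul]
    exact hsep.trace_witness_nonneg h₁' ht₁' h₃ ht₃
  rcases hbisep with h | h | h
  · exact h₁₂ h.sepState_reduced12
  · exact h₁₂ h.sepState_reduced12
  · exact h₁₃ h.sepState_reduced13

end
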